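/- arXiv:2601.02100 — 11 statements merged into one kernel-verified Lean document; each statement's English description precedes it below -/
import Mathlib

section
/- Let S be a subsemigroup of the bicyclic monoid C(p,q) (i.e., a subset of ℕ × ℕ closed under the bicyclic multiplication) such that the set {k ∈ ℕ : (k,k) ∈ S} of idempotents of S is infinite. Then every Hausdorff shift-continuous topology on S (i.e., every Hausdorff topology on S making all left translations x ↦ s·x and all right translations x ↦ x·s continuous) is the discrete topology. -/
/-!
Left translation by the idempotent `(k, k)` fixes exactly the pairs with first coordinate
`≥ k`, and right translation fixes exactly those with second coordinate `≥ k`. In a Hausdorff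
space fixed-point sets of continuous maps are closed, so the finite box `[0, k) × [0, k)` is open.
As `S` has arbitrarily large idempotents, every point lies in such a box, and a point with a finite open
neighbourhood in a T₁ space is isolated.
-/

/-- The bicyclic monoid realized on ℕ × ℕ, where `(k, l)` represents `q^k p^l`:
`(k,l)·(m,n) = (k + m − min(l,m), n + l − min(l,m))`. -/
def bmul (x y : ℕ × ℕ) : ℕ × ℕ :=
  (x.1 + y.1 - min x.2 y.1, y.2 + x.2 - min x.2 y.1)

open Function

theorem bmul_diag_left_eq_self_iff {k : ℕ} {x : ℕ × ℕ} : bmul (k, k) x = x ↔ k ≤ x.1 := by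
  obtain ⟨a, b⟩ := x
  simp only [bmul, Prod.ext_iff]
  omega

theorem bmul_diag_right_eq_self_iff {k : ℕ} {x : ℕ × ℕ} : bmul x (k, k) = x ↔ k ≤ x.2 := by
  obtain ⟨a, b⟩ := x
  simp only [bmul, Prod.ext_iff]
  omega

theorem finite_setOf_fst_lt_and_snd_lt (S : Set (ℕ × ℕ)) (k : ℕ) :
    {x : S | (x : ℕ × ℕ).1 < k ∧ (x : ℕ × ℕ).2 < k}.Finite :=
  ((Set.finite_Iio k).prod (Set.finite_Iio k)).preimage Subtype.val_injective.injOn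

section Translations

variable {S : Set (ℕ × ℕ)} [TopologicalSpace S] [T2Space S] {f : S → S} {k : ℕ}

theorem isClosed_setOf_le_fst (hf : Continuous f) (hfk : ∀ x, (f x : ℕ × ℕ) = bmul (k, k) x) :
    IsClosed {x : S | k ≤ (x : ℕ × ℕ).1} := by
  convert isClosed_fixedPoints hf using 1
  ext x
  simp only [Set.mem_ofPred_eq, mem_fixedPoints, IsFixedPt, Subtype.ext_iff, hfk,
    bmul_diag_left_eq_self_iff]

theorem isClosed_setOf_le_snd (hf : Continuous f) (hfk : ∀ x, (f x : ℕ × ℕ) = bmul x (k, k)) :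
    IsClosed {x : S | k ≤ (x : ℕ × ℕ).2} := by
  convert isClosed_fixedPoints hf using 1
  ext x
  simp only [Set.mem_ofPred_eq, mem_fixedPoints, IsFixedPt, Subtype.ext_iff, hfk,
    bmul_diag_right_eq_self_iff]

end Translations

/-- If a subsemigroup `S` of the bicyclic monoid contains infinitely many idempotents,
then every Hausdorff shift-continuous topology on `S` is discrete. -/
theorem discrete_of_shift_continuous_of_infinite_idempotents
    (S : Set (ℕ × ℕ))
    (hS : ∀ x ∈ S, ∀ y ∈ S, bmul x y ∈ S)
    (hE : {k : ℕ | (k, k) ∈ S}.Infinite)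
    (t : TopologicalSpace S)
    (ht2 : @T2Space S t)
    (hleft : ∀ s : S, @Continuous S S t t
      (fun x => ⟨bmul (s : ℕ × ℕ) (x : ℕ × ℕ), hS _ s.2 _ x.2⟩))
    (hright : ∀ s : S, @Continuous S S t t
      (fun x => ⟨bmul (x : ℕ × ℕ) (s : ℕ × ℕ), hS _ x.2 _ s.2⟩)) :
    t = ⊥ := by
  let _ := t
  refine eq_bot_of_singletons_open fun x => ?_
  obtain ⟨k, hkS, hk⟩ := hE.exists_gt (max (x : ℕ × ℕ).1 (x : ℕ × ℕ).2)
  have hfst := isClosed_setOf_le_fst (hleft ⟨(k, k), hkS⟩) fun _ => rfl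
  have hsnd := isClosed_setOf_le_snd (hright ⟨(k, k), hkS⟩) fun _ => rfl
  have hbox : IsOpen {y : S | (y : ℕ × ℕ).1 < k ∧ (y : ℕ × ℕ).2 < k} := by
    simpa only [Set.compl_ofPred, not_le, Set.ofPred_and] using
      hfst.isOpen_compl.inter hsnd.isOpen_compl
  exact isOpen_singleton_of_finite_mem_nhds x (hbox.mem_nhds ⟨by omega, by omega⟩)
    (finite_setOf_fst_lt_and_snd_lt S k)
end

section
/- Let S be a subsemigroup of the bicyclic monoid C(p,q) that is closed under the inversion map (k,l) ↦ (l,k) (i.e., S is an inverse subsemigroup). Then every Hausdorff shift-continuous topology on S is the discrete topology. -/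
lemma bmul_mk_swap (m n : ℕ) : bmul (m, n) (n, m) = (m, m) := by
  simp [bmul]

lemma bmul_idempotent_left_eq_self_iff {a : ℕ} {y : ℕ × ℕ} :
    bmul (a, a) y = y ↔ a ≤ y.1 := by
  obtain ⟨m, n⟩ := y
  simp only [bmul, Prod.mk.injEq]
  omega

lemma bmul_idempotent_right_eq_self_iff {a : ℕ} {y : ℕ × ℕ} :
    bmul y (a, a) = y ↔ a ≤ y.2 := by
  obtain ⟨m, n⟩ := y
  simp only [bmul, Prod.mk.injEq]
  omega

section InverseSubsemigroup

variable {S : Set (ℕ × ℕ)} (hS : ∀ x ∈ S, ∀ y ∈ S, bmul x y ∈ S)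
  (hinv : ∀ x ∈ S, (Prod.snd x, Prod.fst x) ∈ S)

include hS hinv

lemma mk_fst_fst_mem {m n : ℕ} (h : (m, n) ∈ S) : (m, m) ∈ S :=
  bmul_mk_swap m n ▸ hS _ h _ (hinv _ h)

lemma finite_of_forall_idempotent_lt {N : ℕ} (hN : ∀ a, (a, a) ∈ S → a < N) :
    S.Finite := by
  refine ((Set.finite_Iio N).prod (Set.finite_Iio N)).subset ?_
  rintro ⟨m, n⟩ h
  exact ⟨hN m (mk_fst_fst_mem hS hinv h), hN n (mk_fst_fst_mem hS hinv (hinv _ h))⟩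

end InverseSubsemigroup

section ShiftContinuous

variable {S : Set (ℕ × ℕ)} (hS : ∀ x ∈ S, ∀ y ∈ S, bmul x y ∈ S)
  [TopologicalSpace S] [T2Space S]

lemma isOpen_setOf_fst_lt
    (hleft : ∀ s : S, Continuous (fun x : S => (⟨bmul s x, hS _ s.2 _ x.2⟩ : S)))
    {a : ℕ} (ha : (a, a) ∈ S) : IsOpen {y : S | (y : ℕ × ℕ).1 < a} := by
  convert isOpen_ne_fun (hleft ⟨(a, a), ha⟩) continuous_id using 2 with y
  simp [Subtype.ext_iff, bmul_idempotent_left_eq_self_iff]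

lemma isOpen_setOf_snd_lt
    (hright : ∀ s : S, Continuous (fun x : S => (⟨bmul x s, hS _ x.2 _ s.2⟩ : S)))
    {a : ℕ} (ha : (a, a) ∈ S) : IsOpen {y : S | (y : ℕ × ℕ).2 < a} := by
  convert isOpen_ne_fun (hright ⟨(a, a), ha⟩) continuous_id using 2 with y
  simp [Subtype.ext_iff, bmul_idempotent_right_eq_self_iff]

lemma exists_isOpen_finite_mem (hinv : ∀ x ∈ S, (Prod.snd x, Prod.fst x) ∈ S)
    (hleft : ∀ s : S, Continuous (fun x : S => (⟨bmul s x, hS _ s.2 _ x.2⟩ : S)))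
    (hright : ∀ s : S, Continuous (fun x : S => (⟨bmul x s, hS _ x.2 _ s.2⟩ : S)))
    (x : S) : ∃ U : Set S, IsOpen U ∧ x ∈ U ∧ U.Finite := by
  obtain ⟨⟨k, l⟩, hx⟩ := x
  by_cases hbig : ∃ a, max k l < a ∧ (a, a) ∈ S
  · obtain ⟨a, hlt, ha⟩ := hbig
    refine ⟨{y | (y : ℕ × ℕ).1 < a} ∩ {y | (y : ℕ × ℕ).2 < a},
      (isOpen_setOf_fst_lt hS hleft ha).inter (isOpen_setOf_snd_lt hS hright ha),
      ⟨show k < a by omega, show l < a by omega⟩, ?_⟩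
    exact (((Set.finite_Iio a).prod (Set.finite_Iio a)).preimage
      Subtype.val_injective.injOn).subset fun _ hy => hy
  · have hfin : S.Finite := finite_of_forall_idempotent_lt (N := max k l + 1) hS hinv
      fun a ha => by_contra fun hge => hbig ⟨a, by omega, ha⟩
    exact ⟨Set.univ, isOpen_univ, trivial, Set.finite_univ_iff.mpr hfin.to_subtype⟩

end ShiftContinuous

/-- If `S` is an inverse subsemigroup of the bicyclic monoid (i.e. a subsemigroup closed
under the inversion `(k,l) ↦ (l,k)`), then every Hausdorff shift-continuous topology on
`S` is discrete. -/
theorem discrete_of_shift_continuous_of_inverse_subsemigroup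
    (S : Set (ℕ × ℕ))
    (hS : ∀ x ∈ S, ∀ y ∈ S, bmul x y ∈ S)
    (hinv : ∀ x ∈ S, (Prod.snd x, Prod.fst x) ∈ S)
    (t : TopologicalSpace S)
    (ht2 : @T2Space S t)
    (hleft : ∀ s : S, @Continuous S S t t
      (fun x => ⟨bmul (s : ℕ × ℕ) (x : ℕ × ℕ), hS _ s.2 _ x.2⟩))
    (hright : ∀ s : S, @Continuous S S t t
      (fun x => ⟨bmul (x : ℕ × ℕ) (s : ℕ × ℕ), hS _ x.2 _ s.2⟩)) :
    t = ⊥ := by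
  refine eq_bot_of_singletons_open fun x => ?_
  obtain ⟨U, hUo, hxU, hUf⟩ := exists_isOpen_finite_mem hS hinv hleft hright x
  exact isOpen_singleton_of_finite_mem_nhds x (hUo.mem_nhds hxU) hUf
end

section
/- Let S be an infinite subsemigroup of the bicyclic monoid C(a,b) such that the set {k ∈ ℕ : (k,k) ∈ S} of idempotents of S is finite. Then either S ⊆ C₊(a,b) or S ⊆ C₋(a,b). -/
/-- The subsemigroup `C₊(a,b) = {(i,j) : i ≤ j}` of the bicyclic monoid. -/
def Cplus : Set (ℕ × ℕ) := {x | x.1 ≤ x.2}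

/-- The subsemigroup `C₋(a,b) = {(i,j) : i ≥ j}` of the bicyclic monoid. -/
def Cminus : Set (ℕ × ℕ) := {x | x.2 ≤ x.1}

/-!
Suppose `S` contains some `(b + Δ, b)` with `Δ > 0` and some `(c, c + δ)` with `δ > 0`.
Powers of the first element are `(b + kΔ, b)` and powers of the second are `(c, c + kδ)`.
Taking `n` a common multiple of `Δ` and `δ`, the product `(b + n, b) · (c, c + n)` is the
idempotent `(max b c + n, max b c + n)`, so `S` has arbitrarily large idempotents.
-/

theorem bmul_add_left_add_left (b m n : ℕ) : bmul (b + m, b) (b + n, b) = (b + (m + n), b) := by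
  simp only [bmul, Prod.mk.injEq]
  omega

theorem bmul_add_right_add_right (c m n : ℕ) :
    bmul (c, c + m) (c, c + n) = (c, c + (m + n)) := by
  simp only [bmul, Prod.mk.injEq]
  omega

theorem bmul_add_left_add_right (b c n : ℕ) :
    bmul (b + n, b) (c, c + n) = (max b c + n, max b c + n) := by
  simp only [bmul, Prod.mk.injEq]
  omega

theorem Nat.mul_mem_of_add_mem {A : Set ℕ} (hA : ∀ m ∈ A, ∀ n ∈ A, m + n ∈ A) {d : ℕ}
    (hd : d ∈ A) {k : ℕ} (hk : 0 < k) : k * d ∈ A := by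
  induction k, hk using Nat.le_induction with
  | base => simpa using hd
  | succ k _ ih => simpa [Nat.succ_mul] using hA _ ih _ hd

theorem infinite_idempotents_of_mem_of_mem {S : Set (ℕ × ℕ)}
    (hS : ∀ x ∈ S, ∀ y ∈ S, bmul x y ∈ S) {a b c d : ℕ} (hxS : (a, b) ∈ S) (hx : b < a)
    (hyS : (c, d) ∈ S) (hy : c < d) : {k : ℕ | (k, k) ∈ S}.Infinite := by
  refine Set.infinite_of_forall_exists_gt fun m => ?_
  obtain ⟨Δ, rfl⟩ := Nat.exists_eq_add_of_le hx.le
  obtain ⟨δ, rfl⟩ := Nat.exists_eq_add_of_le hy.le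
  have hΔ : 0 < Δ := by omega
  have hδ : 0 < δ := by omega
  set n := (m + 1) * (Δ * δ)
  have hleft : n ∈ {n | (b + n, b) ∈ S} := by
    rw [show n = ((m + 1) * δ) * Δ by ring]
    refine Nat.mul_mem_of_add_mem (fun i hi j hj => ?_) hxS (by positivity)
    simpa [bmul_add_left_add_left] using hS _ hi _ hj
  have hright : n ∈ {n | (c, c + n) ∈ S} := by
    rw [show n = ((m + 1) * Δ) * δ by ring]
    refine Nat.mul_mem_of_add_mem (fun i hi j hj => ?_) hyS (by positivity)
    simpa [bmul_add_right_add_right] using hS _ hi _ hj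
  refine ⟨max b c + n, ?_, ?_⟩
  · simpa [bmul_add_left_add_right] using hS _ hleft _ hright
  · have : m + 1 ≤ n := Nat.le_mul_of_pos_right _ (by positivity)
    omega

theorem subset_Cplus_or_subset_Cminus_of_finite_idempotents_general
    (S : Set (ℕ × ℕ))
    (hS : ∀ x ∈ S, ∀ y ∈ S, bmul x y ∈ S)
    (hE : {k : ℕ | (k, k) ∈ S}.Finite) :
    S ⊆ Cplus ∨ S ⊆ Cminus := by
  by_contra h
  obtain ⟨hplus, hminus⟩ := not_or.mp h
  obtain ⟨⟨a, b⟩, hxS, hx⟩ := Set.not_subset.mp hplus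
  obtain ⟨⟨c, d⟩, hyS, hy⟩ := Set.not_subset.mp hminus
  exact hE.not_infinite <|
    infinite_idempotents_of_mem_of_mem hS hxS (not_le.mp hx) hyS (not_le.mp hy)

/-- If an infinite subsemigroup `S` of the bicyclic monoid contains only finitely many
idempotents, then either `S ⊆ C₊(a,b)` or `S ⊆ C₋(a,b)`. -/
theorem subset_Cplus_or_subset_Cminus_of_finite_idempotents
    (S : Set (ℕ × ℕ))
    (hinf : S.Infinite)
    (hS : ∀ x ∈ S, ∀ y ∈ S, bmul x y ∈ S)
    (hE : {k : ℕ | (k, k) ∈ S}.Finite) :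
    S ⊆ Cplus ∨ S ⊆ Cminus :=
  subset_Cplus_or_subset_Cminus_of_finite_idempotents_general S hS hE
end

section
/- Every Hausdorff right-continuous topology on the semigroup C₊(a,b) (i.e., every Hausdorff topology on C₊(a,b) making all left translations x ↦ s·x continuous) for which C₊(a,b) is a Baire space is the discrete topology. -/
lemma Cplus.mul_mem {x y : ℕ × ℕ} (hx : x ∈ Cplus) (hy : y ∈ Cplus) :
    bmul x y ∈ Cplus := by
  simp only [Cplus, Set.mem_setOf_eq, bmul] at *
  omega

/-!
In a countable T₁ Baire space the isolated points are dense, since the space is the countable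
union of its closed singletons. Left translations of `C₊(a,b)` have finite fibres, so continuity
pulls an isolated point `p` back to an isolated point `q` whenever some `s` has `s · q = p`,
which happens as soon as `q.2 ≤ p.2` and `q.2 - q.1 ≤ p.2 - p.1`. Translating by the idempotent
`(n+1, n+1)` fixes exactly the points with first coordinate `> n`; by the Hausdorff property the
fixed points form a closed set, so a point `y` has a neighbourhood in which the first coordinate
is `≤ y.1`. Removing the finitely many points with second coordinate `< y.2` leaves a
neighbourhood of `y`, and an isolated point `p` in it satisfies both inequalities for `q = y`.
-/

open Set Filter Topology Function

section Isolated

variable {X Y : Type*} [TopologicalSpace X] [TopologicalSpace Y]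

theorem dense_setOf_isOpen_singleton [T1Space X] [BaireSpace X] [Countable X] :
    Dense {x : X | IsOpen ({x} : Set X)} := by
  have hdense : Dense (⋃ x : X, interior {x}) :=
    dense_iUnion_interior_of_closed (fun _ => isClosed_singleton) (iUnion_of_singleton X)
  refine hdense.mono (iUnion_subset fun x z hz => ?_)
  obtain rfl : z = x := mem_singleton_iff.mp (interior_subset hz)
  exact subset_interior_iff_isOpen.mp (singleton_subset_iff.mpr hz)

theorem Continuous.isOpen_singleton_of_finite_fiber [T1Space X] {f : X → Y} (hf : Continuous f)
    {x : X} (hx : IsOpen ({f x} : Set Y)) (hfin : (f ⁻¹' {f x}).Finite) :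
    IsOpen ({x} : Set X) :=
  isOpen_singleton_of_finite_mem_nhds x ((hx.preimage hf).mem_nhds rfl) hfin

end Isolated

theorem snd_le_snd_bmul (x y : ℕ × ℕ) : y.2 ≤ (bmul x y).2 := by
  simp only [bmul]
  omega

theorem bmul_diag_eq_self_iff {n : ℕ} {x : ℕ × ℕ} : bmul (n, n) x = x ↔ n ≤ x.1 := by
  obtain ⟨a, b⟩ := x
  simp only [bmul, Prod.mk.injEq]
  omega

theorem bmul_eq_of_snd_le {p q : ℕ × ℕ} (h₂ : q.2 ≤ p.2) (h : q.2 + p.1 ≤ p.2 + q.1) :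
    bmul (p.1, q.1 + (p.2 - q.2)) q = p := by
  obtain ⟨a, b⟩ := p
  simp only [bmul, Prod.mk.injEq] at *
  omega

namespace Cplus

def mulLeft (s x : Cplus) : Cplus :=
  ⟨bmul s x, mul_mem s.2 x.2⟩

theorem fst_le_snd (x : Cplus) : x.1.1 ≤ x.1.2 :=
  x.2

theorem finite_setOf_snd_le (n : ℕ) : {x : Cplus | x.1.2 ≤ n}.Finite := by
  refine ((finite_Iic n).prod (finite_Iic n)).preimage Subtype.val_injective.injOn |>.subset ?_
  intro x hx
  exact ⟨(fst_le_snd x).trans hx, hx⟩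

variable [TopologicalSpace Cplus]

theorem setOf_le_snd_mem_nhds [T1Space Cplus] (y : Cplus) :
    {x : Cplus | y.1.2 ≤ x.1.2} ∈ 𝓝 y := by
  have hfin : {x : Cplus | x.1.2 < y.1.2}.Finite :=
    (finite_setOf_snd_le y.1.2).subset <| ofPred_subset_ofPred.mpr fun _ => le_of_lt
  simpa only [compl_ofPred, not_lt] using hfin.isClosed.isOpen_compl.mem_nhds (lt_irrefl y.1.2)

theorem setOf_fst_le_mem_nhds [T2Space Cplus] (hleft : ∀ s, Continuous (mulLeft s))
    (y : Cplus) : {x : Cplus | x.1.1 ≤ y.1.1} ∈ 𝓝 y := by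
  let e : Cplus := ⟨(y.1.1 + 1, y.1.1 + 1), (le_rfl : y.1.1 + 1 ≤ _)⟩
  have hfix : fixedPoints (mulLeft e) = {x | y.1.1 < x.1.1} := by
    ext x
    exact Subtype.ext_iff.trans bmul_diag_eq_self_iff
  have hopen : IsOpen {x : Cplus | x.1.1 ≤ y.1.1} := by
    simpa only [hfix, compl_ofPred, not_lt] using (isClosed_fixedPoints (hleft e)).isOpen_compl
  exact hopen.mem_nhds (le_refl y.1.1)

theorem isOpen_singleton_of_snd_le [T1Space Cplus] (hleft : ∀ s, Continuous (mulLeft s))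
    {p q : Cplus} (hp : IsOpen ({p} : Set Cplus)) (h₂ : q.1.2 ≤ p.1.2)
    (h : q.1.2 + p.1.1 ≤ p.1.2 + q.1.1) : IsOpen ({q} : Set Cplus) := by
  let s : Cplus := ⟨(p.1.1, q.1.1 + (p.1.2 - q.1.2)), show p.1.1 ≤ _ by omega⟩
  have hsq : mulLeft s q = p := Subtype.ext (bmul_eq_of_snd_le h₂ h)
  refine (hleft s).isOpen_singleton_of_finite_fiber (by rwa [hsq]) ?_
  refine (finite_setOf_snd_le p.1.2).subset fun x hx => ?_
  rw [mem_preimage, mem_singleton_iff, hsq] at hx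
  exact hx ▸ snd_le_snd_bmul s.1 x.1

end Cplus

/-- Every Hausdorff right-continuous topology on `C₊(a,b)` (all left translations
continuous) which is a Baire space is discrete. -/
theorem Cplus_discrete_of_rightContinuous_of_baire
    (t : TopologicalSpace Cplus)
    (ht2 : @T2Space Cplus t)
    (hBaire : @BaireSpace Cplus t)
    (hleft : ∀ s : Cplus, @Continuous Cplus Cplus t t
      (fun x => ⟨bmul (s : ℕ × ℕ) (x : ℕ × ℕ), Cplus.mul_mem s.2 x.2⟩)) :
    t = ⊥ := by
  let := t
  have hleft' : ∀ s, Continuous (Cplus.mulLeft s) := hleft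
  refine eq_bot_of_singletons_open fun y => ?_
  obtain ⟨p, hp, hp₁, hp₂⟩ := dense_setOf_isOpen_singleton.inter_nhds_nonempty
    (inter_mem (Cplus.setOf_fst_le_mem_nhds hleft' y) (Cplus.setOf_le_snd_mem_nhds y))
  exact Cplus.isOpen_singleton_of_snd_le hleft' hp hp₂ (Nat.add_le_add hp₂ hp₁)
end

section
/- Every Hausdorff left-continuous topology on the semigroup C₋(a,b) (i.e., every Hausdorff topology on C₋(a,b) making all right translations x ↦ x·s continuous) for which C₋(a,b) is a Baire space is the discrete topology. -/
lemma Cminus.mul_mem {x y : ℕ × ℕ} (hx : x ∈ Cminus) (hy : y ∈ Cminus) :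
    bmul x y ∈ Cminus := by
  simp only [Cminus, Set.mem_setOf_eq, bmul] at *
  omega

/-!
Right translations of `C₋(a,b)` have finite fibres, so a point is isolated as soon as one of its
right translates is. The right translates of `(i,j)` fill `{(k,l) : i ≤ k, l ≤ j}`, which is open:
its complement is a finite set together with the fixed-point set of the right translation by the
idempotent `(j+1,j+1)`, closed in a Hausdorff space. A countable Baire T1 space has an isolated
point in every nonempty open set, in particular in this one.
-/

open Set

theorem IsOpen.exists_isOpen_singleton {X : Type*} [TopologicalSpace X] [T1Space X]
    [BaireSpace X] [Countable X] {U : Set X} (hU : IsOpen U) (hne : U.Nonempty) :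
    ∃ x ∈ U, IsOpen ({x} : Set X) := by
  have := hU.baireSpace
  have := hne.to_subtype
  obtain ⟨x, hx⟩ := nonempty_interior_of_iUnion_of_closed (f := fun x : U => {x})
    (fun _ => isClosed_singleton) (iUnion_of_singleton U)
  have hxU : IsOpen ({x} : Set U) := by
    rw [← hx.subset_singleton_iff.1 interior_subset]
    exact isOpen_interior
  refine ⟨x, x.2, ?_⟩
  simpa using hU.isOpenMap_subtype_val _ hxU

namespace Cminus

def rightMul (s x : Cminus) : Cminus :=
  ⟨bmul x s, mul_mem x.2 s.2⟩

theorem finite_setOf_fst_le (N : ℕ) : {x : Cminus | (x : ℕ × ℕ).1 ≤ N}.Finite := by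
  refine ((finite_Iic N).prod (finite_Iic N)).preimage Subtype.val_injective.injOn |>.subset ?_
  intro x hx
  have hx₂ : (x : ℕ × ℕ).2 ≤ (x : ℕ × ℕ).1 := x.2
  exact ⟨hx, hx₂.trans hx⟩

theorem fst_le_fst_rightMul (s x : Cminus) :
    (x : ℕ × ℕ).1 ≤ (rightMul s x : ℕ × ℕ).1 := by
  have hs : (s : ℕ × ℕ).2 ≤ (s : ℕ × ℕ).1 := s.2
  simp only [rightMul, bmul]
  omega

theorem finite_preimage_rightMul (s y : Cminus) : (rightMul s ⁻¹' {y}).Finite :=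
  (finite_setOf_fst_le (y : ℕ × ℕ).1).subset fun x hx => by
    simpa [show rightMul s x = y from hx] using fst_le_fst_rightMul s x

theorem rightMul_diag_eq_self_iff (n : ℕ) (x : Cminus) :
    rightMul ⟨(n, n), le_refl n⟩ x = x ↔ n ≤ (x : ℕ × ℕ).2 := by
  have hx : (x : ℕ × ℕ).2 ≤ (x : ℕ × ℕ).1 := x.2
  simp only [rightMul, bmul, Subtype.ext_iff, Prod.ext_iff]
  omega

theorem exists_rightMul_eq {x y : Cminus} (h₁ : (x : ℕ × ℕ).1 ≤ (y : ℕ × ℕ).1)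
    (h₂ : (y : ℕ × ℕ).2 ≤ (x : ℕ × ℕ).2) : ∃ s, rightMul s x = y := by
  obtain ⟨⟨i, j⟩, hx⟩ := x
  obtain ⟨⟨k, l⟩, hy⟩ := y
  have hx' : j ≤ i := hx
  simp only at h₁ h₂
  refine ⟨⟨(k - i + j, l), show l ≤ k - i + j by omega⟩, ?_⟩
  simp only [rightMul, bmul, Subtype.ext_iff, Prod.ext_iff]
  omega

variable [TopologicalSpace Cminus]

theorem isOpen_setOf_le_fst [T1Space Cminus] (i : ℕ) :
    IsOpen {x : Cminus | i ≤ (x : ℕ × ℕ).1} := by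
  have hfin : {x : Cminus | ¬i ≤ (x : ℕ × ℕ).1}.Finite :=
    (finite_setOf_fst_le i).subset fun _ hx => (not_le.1 hx).le
  simpa only [compl_ofPred, not_not] using hfin.isClosed.isOpen_compl

theorem isOpen_setOf_snd_le [T2Space Cminus] (hright : ∀ s, Continuous (rightMul s)) (j : ℕ) :
    IsOpen {x : Cminus | (x : ℕ × ℕ).2 ≤ j} := by
  have hc := (isClosed_fixedPoints (hright ⟨(j + 1, j + 1), le_refl (j + 1)⟩)).isOpen_compl
  convert hc using 1
  ext x
  simp only [mem_ofPred_eq, mem_compl_iff, Function.mem_fixedPoints, Function.IsFixedPt,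
    rightMul_diag_eq_self_iff]
  omega

end Cminus

/-- Every Hausdorff left-continuous topology on `C₋(a,b)` (all right translations
continuous) which is a Baire space is discrete. -/
theorem Cminus_discrete_of_leftContinuous_of_baire
    (t : TopologicalSpace Cminus)
    (ht2 : @T2Space Cminus t)
    (hBaire : @BaireSpace Cminus t)
    (hright : ∀ s : Cminus, @Continuous Cminus Cminus t t
      (fun x => ⟨bmul (x : ℕ × ℕ) (s : ℕ × ℕ), Cminus.mul_mem x.2 s.2⟩)) :
    t = ⊥ := by
  let := t
  have hcont : ∀ s, Continuous (Cminus.rightMul s) := hright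
  refine eq_bot_of_singletons_open fun x => ?_
  obtain ⟨y, ⟨hy₁, hy₂⟩, hy⟩ :=
    ((Cminus.isOpen_setOf_le_fst (x : ℕ × ℕ).1).inter
      (Cminus.isOpen_setOf_snd_le hcont (x : ℕ × ℕ).2)).exists_isOpen_singleton
      ⟨x, le_refl (x : ℕ × ℕ).1, le_refl (x : ℕ × ℕ).2⟩
  obtain ⟨s, rfl⟩ := Cminus.exists_rightMul_eq hy₁ hy₂
  exact isOpen_singleton_of_finite_mem_nhds x ((hy.preimage (hcont s)).mem_nhds rfl)
    (Cminus.finite_preimage_rightMul s _)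
end

section
/- Every Hausdorff right-continuous topology on the semigroup C₊(a,b) (i.e., every Hausdorff topology on C₊(a,b) making all left translations x ↦ s·x continuous) for which C₊(a,b) is locally compact is the discrete topology. -/
open Set Topology

section Baire

variable {X : Type*} [TopologicalSpace X] [BaireSpace X] [T1Space X]

theorem exists_isOpen_singleton_of_countable [Countable X] [Nonempty X] :
    ∃ x : X, IsOpen ({x} : Set X) := by
  obtain ⟨x, hx⟩ := nonempty_interior_of_iUnion_of_closed (fun x : X => isClosed_singleton)
    (iUnion_of_singleton X)
  exact ⟨x, hx.subset_singleton_iff.mp interior_subset ▸ isOpen_interior⟩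

theorem IsOpen.exists_isOpen_singleton_of_countable {W : Set X} (hW : IsOpen W)
    (hc : W.Countable) (hne : W.Nonempty) : ∃ x ∈ W, IsOpen ({x} : Set X) := by
  have := hW.baireSpace
  have := hc.to_subtype
  have := hne.to_subtype
  obtain ⟨x, hx⟩ := _root_.exists_isOpen_singleton_of_countable (X := W)
  exact ⟨x, x.2, by simpa using hW.isOpenMap_subtype_val _ hx⟩

end Baire

theorem isOpen_singleton_of_isOpen_singleton_image {X Y : Type*} [TopologicalSpace X]
    [T1Space X] [TopologicalSpace Y] {f : X → Y} (hf : Continuous f) {x : X}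
    (hfx : IsOpen ({f x} : Set Y)) (hfin : (f ⁻¹' {f x}).Finite) : IsOpen ({x} : Set X) :=
  isOpen_singleton_of_finite_mem_nhds x ((hfx.preimage hf).mem_nhds rfl) hfin

theorem bmul_zero_left_of_le {j a : ℕ} (b : ℕ) (h : a ≤ j) :
    bmul (0, j) (a, b) = (0, b + j - a) := by
  simp only [bmul, Prod.mk.injEq]
  omega

theorem finite_setOf_bmul_zero_left_eq (j c : ℕ) :
    {y : ℕ × ℕ | bmul (0, j) y = (0, c)}.Finite := by
  refine ((finite_Iic j).prod (finite_Iic c)).subset ?_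
  rintro ⟨m, n⟩ hy
  simp only [mem_ofPred_eq, bmul, Prod.mk.injEq] at hy
  simp only [mem_prod, mem_Iic]
  omega

theorem bmul_one_one_eq_self_iff (x : ℕ × ℕ) : bmul (1, 1) x = x ↔ x.1 ≠ 0 := by
  obtain ⟨m, n⟩ := x
  simp only [bmul, Prod.mk.injEq]
  omega

namespace Cplus

def leftMul (s : Cplus) (x : Cplus) : Cplus :=
  ⟨bmul s x, mul_mem s.2 x.2⟩

theorem finite_leftMul_zero_preimage (j c : ℕ) (hc : ((0, c) : ℕ × ℕ) ∈ Cplus) :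
    (leftMul ⟨(0, j), Nat.zero_le j⟩ ⁻¹' {⟨(0, c), hc⟩}).Finite :=
  ((finite_setOf_bmul_zero_left_eq j c).preimage Subtype.val_injective.injOn).subset
    fun _ hy => congrArg Subtype.val hy

theorem leftMul_zero_eq {a b : ℕ} (hab : a ≤ b) {c : ℕ} (hbc : b ≤ c) :
    leftMul ⟨(0, a + c - b), Nat.zero_le _⟩ ⟨(a, b), hab⟩ = ⟨(0, c), Nat.zero_le c⟩ := by
  refine Subtype.ext ?_
  simp only [leftMul, bmul_zero_left_of_le b (by omega : a ≤ a + c - b)]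
  congr 1
  omega

variable [TopologicalSpace Cplus]

theorem isOpen_setOf_fst_eq_zero [T2Space Cplus]
    (h : Continuous (leftMul ⟨(1, 1), Nat.le_refl 1⟩)) :
    IsOpen {x : Cplus | (x : ℕ × ℕ).1 = 0} := by
  have hfix : {x : Cplus | (x : ℕ × ℕ).1 = 0} =
      {x | leftMul ⟨(1, 1), Nat.le_refl 1⟩ x = x}ᶜ := by
    ext x
    simp [leftMul, Subtype.ext_iff, bmul_one_one_eq_self_iff]
  rw [hfix]
  exact (isClosed_eq h continuous_id).isOpen_compl

theorem isOpen_setOf_le_snd [T1Space Cplus] (b : ℕ) :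
    IsOpen {x : Cplus | b ≤ (x : ℕ × ℕ).2} := by
  have hfin : {x : Cplus | (x : ℕ × ℕ).2 < b}.Finite := by
    refine (((finite_Iio b).prod (finite_Iio b)).preimage Subtype.val_injective.injOn).subset ?_
    rintro ⟨⟨m, n⟩, hmn⟩ hx
    simp only [mem_ofPred_eq, mem_preimage, mem_prod, mem_Iio] at hx ⊢
    exact ⟨lt_of_le_of_lt hmn hx, hx⟩
  simpa [compl_ofPred] using hfin.isClosed.isOpen_compl

end Cplus

/-- Every Hausdorff right-continuous topology on `C₊(a,b)` (all left translations
continuous) which is locally compact (every point has an open neighbourhood with compact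
closure) is discrete. -/
theorem Cplus_discrete_of_rightContinuous_of_locallyCompact
    (t : TopologicalSpace Cplus)
    (ht2 : @T2Space Cplus t)
    (hLC : ∀ x : Cplus, ∃ U : Set Cplus,
      @IsOpen Cplus t U ∧ x ∈ U ∧ @IsCompact Cplus t (@closure Cplus t U))
    (hleft : ∀ s : Cplus, @Continuous Cplus Cplus t t
      (fun x => ⟨bmul (s : ℕ × ℕ) (x : ℕ × ℕ), Cplus.mul_mem s.2 x.2⟩)) :
    t = ⊥ := by
  have : WeaklyLocallyCompactSpace Cplus := ⟨fun x =>
    let ⟨U, hU, hxU, hK⟩ := hLC x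
    ⟨closure U, hK, Filter.mem_of_superset (hU.mem_nhds hxU) subset_closure⟩⟩
  have hcont : ∀ s, Continuous (Cplus.leftMul s) := hleft
  refine eq_bot_of_singletons_open fun ⟨⟨a, b⟩, hab⟩ => ?_
  have hW := (Cplus.isOpen_setOf_fst_eq_zero (hcont _)).inter (Cplus.isOpen_setOf_le_snd b)
  obtain ⟨⟨⟨_, c⟩, _⟩, ⟨rfl, hbc⟩, hc⟩ := hW.exists_isOpen_singleton_of_countable
    (to_countable _) ⟨⟨(0, b), b.zero_le⟩, rfl, le_refl b⟩
  have hmap := Cplus.leftMul_zero_eq hab hbc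
  refine isOpen_singleton_of_isOpen_singleton_image (hcont _) (hmap ▸ hc) ?_
  rw [hmap]
  exact Cplus.finite_leftMul_zero_preimage _ c _
end

section
/- Every Hausdorff right-continuous topology on the bicyclic monoid C(a,b) (i.e., every Hausdorff topology on ℕ × ℕ making all left translations x ↦ s·x of the bicyclic multiplication continuous) for which the space is Baire is the discrete topology. -/
/-!
Left translation by `(1, 1)` fixes exactly the points off the column `{0} × ℕ`, so in a Hausdorff
right-continuous topology that column is open. The space is countable, so by Baire's theorem the
isolated points are dense; the open column minus a finite set therefore contains isolated points
`(0, l)` with `l` arbitrarily large. Every left translation is finite-to-one, so the preimage of an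
isolated point is a finite open set, all of whose points are isolated; and `(m, n)` lies in the
preimage of `(0, l)` under translation by `(0, m + l - n)` whenever `n ≤ l`.
-/

open Set

theorem exists_isOpen_singleton_mem {X : Type*} [TopologicalSpace X] [T1Space X] [Countable X]
    [BaireSpace X] {U : Set X} (hU : IsOpen U) (hne : U.Nonempty) : ∃ x ∈ U, IsOpen {x} := by
  have hdense : Dense (⋃ x : X, interior {x}) :=
    dense_iUnion_interior_of_closed (fun _ => isClosed_singleton) (iUnion_of_singleton X)
  obtain ⟨y, hyU, hy⟩ := hdense.inter_open_nonempty U hU hne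
  obtain ⟨x, hx⟩ := mem_iUnion.1 hy
  obtain rfl : y = x := mem_singleton_iff.1 (interior_subset hx)
  exact ⟨y, hyU, interior_subset.antisymm (singleton_subset_iff.2 hx) ▸ isOpen_interior⟩

theorem isOpen_singleton_of_finite_preimage {X Y : Type*} [TopologicalSpace X]
    [TopologicalSpace Y] [T1Space X] {f : X → Y} {x : X} (hf : Continuous f)
    (hfin : (f ⁻¹' {f x}).Finite) (hx : IsOpen {f x}) : IsOpen {x} :=
  isOpen_singleton_of_finite_mem_nhds x ((hx.preimage hf).mem_nhds rfl) hfin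

theorem finite_preimage_bmul_singleton (s w : ℕ × ℕ) : (bmul s ⁻¹' {w}).Finite := by
  refine (finite_Iic (w.1 + s.2, w.2)).subset fun z hz => ?_
  simp only [mem_preimage, mem_singleton_iff, bmul, Prod.ext_iff] at hz
  simp only [mem_Iic, Prod.le_def]
  omega

theorem bmul_one_one_ne_self_iff (z : ℕ × ℕ) : bmul (1, 1) z ≠ z ↔ z.1 = 0 := by
  simp only [bmul, ne_eq, Prod.ext_iff]
  omega

theorem bmul_zero_add_sub_mk_of_le {l n : ℕ} (m : ℕ) (hnl : n ≤ l) :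
    bmul (0, m + l - n) (m, n) = (0, l) := by
  simp only [bmul, Prod.ext_iff]
  omega

/-- Every Hausdorff right-continuous topology on the bicyclic monoid (all left
translations continuous) which is a Baire space is discrete. -/
theorem bicyclic_discrete_of_rightContinuous_of_baire
    (t : TopologicalSpace (ℕ × ℕ))
    (ht2 : @T2Space (ℕ × ℕ) t)
    (hBaire : @BaireSpace (ℕ × ℕ) t)
    (hleft : ∀ s : ℕ × ℕ, @Continuous (ℕ × ℕ) (ℕ × ℕ) t t (fun x => bmul s x)) :
    t = ⊥ := by
  let _ := t
  have hcolumn : IsOpen {z : ℕ × ℕ | z.1 = 0} := by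
    simpa only [id_eq, bmul_one_one_ne_self_iff] using isOpen_ne_fun (hleft (1, 1)) continuous_id
  have hisolated : ∀ n : ℕ, ∃ l, n ≤ l ∧ IsOpen {((0 : ℕ), l)} := by
    intro n
    obtain ⟨⟨k, l⟩, ⟨rfl, hln⟩, hl⟩ := exists_isOpen_singleton_mem
      (hcolumn.sdiff (finite_Iic ((0 : ℕ), n)).isClosed) ⟨(0, n + 1), rfl, by simp⟩
    simp only [mem_Iic, Prod.mk_le_mk, le_refl, true_and, not_le] at hln
    exact ⟨l, hln.le, hl⟩
  refine eq_bot_of_singletons_open fun ⟨m, n⟩ => ?_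
  obtain ⟨l, hnl, hl⟩ := hisolated n
  refine isOpen_singleton_of_finite_preimage (hleft (0, m + l - n))
    (finite_preimage_bmul_singleton _ _) ?_
  rwa [bmul_zero_add_sub_mk_of_le m hnl]
end

section
/- Let p be a prime and m ≤ n natural numbers. The topology τ_p^{m,n} on C₊^{[m,n]}(a,b) is Hausdorff and is not the discrete topology. -/
/-- The subsemigroup `C₊^{[m,n]}(a,b) = {(i, i+j) : m ≤ i ≤ n, j ∈ ℕ}` of the bicyclic
monoid. -/
def Cmn (m n : ℕ) : Set (ℕ × ℕ) := {x | m ≤ x.1 ∧ x.1 ≤ n ∧ x.1 ≤ x.2}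

/-- The topology `τ_p^{m,n}` on `C₊^{[m,n]}(a,b)`, generated by the base consisting of the
singletons `{(i, i+j)}` for `i + j ≤ n` together with the sets
`V_s(i, i+j) = {(i, i+j+t) : t ∈ p^s·ℕ}` for `i + j > n` and `s ≥ 1`. -/
def tauP (p m n : ℕ) : TopologicalSpace (Cmn m n) :=
  TopologicalSpace.generateFrom
    ({U | ∃ x : Cmn m n, (x : ℕ × ℕ).2 ≤ n ∧ U = {x}} ∪
     {U | ∃ x : Cmn m n, ∃ s : ℕ, 1 ≤ s ∧ n < (x : ℕ × ℕ).2 ∧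
        U = {y : Cmn m n | ∃ t : ℕ,
          (y : ℕ × ℕ) = ((x : ℕ × ℕ).1, (x : ℕ × ℕ).2 + p ^ s * t)}})

/-!
Points `(i, k)` with `k ≤ n` are isolated, and a point with `n < k` has the neighbourhood
basis `V_s(i, k)`, `s ≥ 1`. To separate `(i, k) ≠ (i, k')` take `s` with
`k, k' < p ^ s`: second coordinates in `V_s(i, k)` are `≡ k` modulo `p ^ s`, those in
`V_s(i, k')` are `≡ k'`. The point `(n, n + 1)` is not isolated, since every `V_s(n, n + 1)`
also contains `(n, n + 1 + p ^ s)`.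
-/

/-- The sets `V_s(x)` of the base of `tauP`. -/
def vNbhd (p s : ℕ) {m n : ℕ} (x : Cmn m n) : Set (Cmn m n) :=
  {y | ∃ t : ℕ, (y : ℕ × ℕ) = ((x : ℕ × ℕ).1, (x : ℕ × ℕ).2 + p ^ s * t)}

open scoped Topology

section vNbhd

variable {p s m n : ℕ} {x y : Cmn m n}

theorem mem_vNbhd_self : x ∈ vNbhd p s x :=
  ⟨0, by simp⟩

theorem fst_eq_of_mem_vNbhd (h : y ∈ vNbhd p s x) : (y : ℕ × ℕ).1 = (x : ℕ × ℕ).1 := by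
  obtain ⟨t, ht⟩ := h
  rw [ht]

theorem snd_eq_of_mem_vNbhd (h : y ∈ vNbhd p s x) :
    ∃ t, (y : ℕ × ℕ).2 = (x : ℕ × ℕ).2 + p ^ s * t := by
  obtain ⟨t, ht⟩ := h
  exact ⟨t, by rw [ht]⟩

theorem snd_le_of_mem_vNbhd (h : y ∈ vNbhd p s x) : (x : ℕ × ℕ).2 ≤ (y : ℕ × ℕ).2 := by
  obtain ⟨t, ht⟩ := snd_eq_of_mem_vNbhd h
  omega

theorem snd_mod_of_mem_vNbhd (h : y ∈ vNbhd p s x) :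
    (y : ℕ × ℕ).2 % p ^ s = (x : ℕ × ℕ).2 % p ^ s := by
  obtain ⟨t, ht⟩ := snd_eq_of_mem_vNbhd h
  rw [ht, Nat.add_mul_mod_self_left]

theorem vNbhd_subset_of_mem (h : y ∈ vNbhd p s x) : vNbhd p s y ⊆ vNbhd p s x := by
  rintro z ⟨u, hu⟩
  obtain ⟨t, ht⟩ := h
  exact ⟨t + u, by rw [hu, ht, mul_add, add_assoc]⟩

theorem vNbhd_antitone {s' : ℕ} (h : s ≤ s') : vNbhd p s' x ⊆ vNbhd p s x := by
  rintro z ⟨t, ht⟩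
  obtain ⟨k, rfl⟩ := Nat.exists_eq_add_of_le h
  exact ⟨p ^ k * t, by rw [ht, pow_add, mul_assoc]⟩

theorem disjoint_vNbhd_of_fst_ne {s' : ℕ} (h : (x : ℕ × ℕ).1 ≠ (y : ℕ × ℕ).1) :
    Disjoint (vNbhd p s x) (vNbhd p s' y) :=
  Set.disjoint_left.mpr fun _ hx hy =>
    h ((fst_eq_of_mem_vNbhd hx).symm.trans (fst_eq_of_mem_vNbhd hy))

theorem disjoint_vNbhd_of_snd_lt_pow (h : (x : ℕ × ℕ).2 ≠ (y : ℕ × ℕ).2)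
    (hx : (x : ℕ × ℕ).2 < p ^ s) (hy : (y : ℕ × ℕ).2 < p ^ s) :
    Disjoint (vNbhd p s x) (vNbhd p s y) := by
  refine Set.disjoint_left.mpr fun z hzx hzy => h ?_
  rw [← Nat.mod_eq_of_lt hx, ← Nat.mod_eq_of_lt hy, ← snd_mod_of_mem_vNbhd hzx,
    snd_mod_of_mem_vNbhd hzy]

theorem exists_disjoint_vNbhd (hp : 1 < p) (h : x ≠ y) :
    ∃ s, 1 ≤ s ∧ Disjoint (vNbhd p s x) (vNbhd p s y) := by
  by_cases hfst : (x : ℕ × ℕ).1 = (y : ℕ × ℕ).1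
  · have hsnd : (x : ℕ × ℕ).2 ≠ (y : ℕ × ℕ).2 := fun hsnd =>
      h (Subtype.ext (Prod.ext hfst hsnd))
    set s := (x : ℕ × ℕ).2 + (y : ℕ × ℕ).2 + 1
    have hpow : s < p ^ s := Nat.lt_pow_self hp
    exact ⟨s, by omega, disjoint_vNbhd_of_snd_lt_pow hsnd (by omega) (by omega)⟩
  · exact ⟨1, le_rfl, disjoint_vNbhd_of_fst_ne hfst⟩

theorem disjoint_singleton_vNbhd (h : (x : ℕ × ℕ).2 < (y : ℕ × ℕ).2) :
    Disjoint {x} (vNbhd p s y) :=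
  Set.disjoint_singleton_left.mpr fun hx => (snd_le_of_mem_vNbhd hx).not_gt h

theorem exists_ne_mem_vNbhd (hp : 0 < p) : ∃ y ∈ vNbhd p s x, y ≠ x := by
  have hpow : 0 < p ^ s := pow_pos hp s
  refine ⟨⟨((x : ℕ × ℕ).1, (x : ℕ × ℕ).2 + p ^ s * 1), ?_⟩, ⟨1, rfl⟩, fun h => ?_⟩
  · obtain ⟨hm, hn, hle⟩ := x.2
    exact ⟨hm, hn, by omega⟩
  · have := congrArg (fun z : Cmn m n => (z : ℕ × ℕ).2) h
    simp only at this
    omega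

theorem isOpen_vNbhd (hs : 1 ≤ s) (hx : n < (x : ℕ × ℕ).2) :
    IsOpen[tauP p m n] (vNbhd p s x) :=
  .basic _ (Or.inr ⟨x, s, hs, hx, rfl⟩)

theorem isOpen_singleton_of_snd_le (hx : (x : ℕ × ℕ).2 ≤ n) : IsOpen[tauP p m n] {x} :=
  .basic _ (Or.inl ⟨x, hx, rfl⟩)

theorem exists_vNbhd_subset_of_isOpen {U : Set (Cmn m n)} (hU : IsOpen[tauP p m n] U)
    (hxU : x ∈ U) (hx : n < (x : ℕ × ℕ).2) : ∃ s, 1 ≤ s ∧ vNbhd p s x ⊆ U := by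
  induction hU with
  | basic V hV =>
    rcases hV with ⟨z, hz, rfl⟩ | ⟨z, s, hs, -, rfl⟩
    · rw [Set.mem_singleton_iff.mp hxU] at hx
      omega
    · exact ⟨s, hs, vNbhd_subset_of_mem hxU⟩
  | univ => exact ⟨1, le_rfl, Set.subset_univ _⟩
  | inter V W _ _ ihV ihW =>
    obtain ⟨s, hs, hV⟩ := ihV hxU.1
    obtain ⟨s', -, hW⟩ := ihW hxU.2
    exact ⟨s + s', by omega, Set.subset_inter ((vNbhd_antitone (by omega)).trans hV)
      ((vNbhd_antitone (by omega)).trans hW)⟩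
  | sUnion S _ ihS =>
    obtain ⟨V, hVS, hxV⟩ := hxU
    obtain ⟨s, hs, hV⟩ := ihS V hVS hxV
    exact ⟨s, hs, hV.trans (Set.subset_sUnion_of_mem hVS)⟩

theorem not_isOpen_singleton_of_lt_snd (hp : 0 < p) (hx : n < (x : ℕ × ℕ).2) :
    ¬IsOpen[tauP p m n] {x} := fun hopen => by
  obtain ⟨s, -, hsub⟩ := exists_vNbhd_subset_of_isOpen hopen rfl hx
  obtain ⟨y, hy, hyx⟩ := exists_ne_mem_vNbhd (s := s) (x := x) hp
  exact hyx (hsub hy)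

end vNbhd

theorem t2Space_tauP {p m n : ℕ} (hp : 1 < p) : @T2Space (Cmn m n) (tauP p m n) := by
  refine @T2Space.mk _ (tauP p m n) fun x y hxy => ?_
  rcases le_or_gt (x : ℕ × ℕ).2 n with hx | hx <;> rcases le_or_gt (y : ℕ × ℕ).2 n with hy | hy
  · exact ⟨{x}, {y}, isOpen_singleton_of_snd_le hx, isOpen_singleton_of_snd_le hy, rfl, rfl,
      Set.disjoint_singleton.mpr hxy⟩
  · exact ⟨{x}, vNbhd p 1 y, isOpen_singleton_of_snd_le hx, isOpen_vNbhd le_rfl hy, rfl,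
      mem_vNbhd_self, disjoint_singleton_vNbhd (by omega)⟩
  · exact ⟨vNbhd p 1 x, {y}, isOpen_vNbhd le_rfl hx, isOpen_singleton_of_snd_le hy,
      mem_vNbhd_self, rfl, (disjoint_singleton_vNbhd (by omega)).symm⟩
  · obtain ⟨s, hs, hdisj⟩ := exists_disjoint_vNbhd hp hxy
    exact ⟨vNbhd p s x, vNbhd p s y, isOpen_vNbhd hs hx, isOpen_vNbhd hs hy,
      mem_vNbhd_self, mem_vNbhd_self, hdisj⟩

theorem tauP_ne_bot {p m n : ℕ} (hp : 0 < p) (hmn : m ≤ n) : tauP p m n ≠ ⊥ := fun h =>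
  not_isOpen_singleton_of_lt_snd (x := ⟨(n, n + 1), hmn, le_rfl, by omega⟩) hp
    (Nat.lt_succ_self n) (by rw [h]; exact @isOpen_discrete _ ⊥ (discreteTopology_bot _) _)

/-- For a prime `p` and `m ≤ n`, the topology `τ_p^{m,n}` on `C₊^{[m,n]}(a,b)` is
Hausdorff and non-discrete. -/
theorem tauP_t2Space_and_not_discrete (p m n : ℕ) (hp : p.Prime) (hmn : m ≤ n) :
    @T2Space (Cmn m n) (tauP p m n) ∧ tauP p m n ≠ ⊥ :=
  ⟨t2Space_tauP hp.one_lt, tauP_ne_bot hp.pos hmn⟩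
end

section
/- Let S be a subsemigroup of the bicyclic monoid and suppose (i,j) ∈ S and (j,i) ∈ S for some i < j. Then for every positive integer n the idempotent (i + n(j−i), i + n(j−i)) belongs to S; in particular S contains infinitely many idempotents. -/
theorem bmul_mk_mk_of_le {k l m n : ℕ} (h : l ≤ m) : bmul (k, l) (m, n) = (k + m - l, n) := by
  simp only [bmul, min_eq_left h]
  ext <;> simp

theorem bmul_mk_mk_of_ge {k l m n : ℕ} (h : m ≤ l) : bmul (k, l) (m, n) = (k, n + l - m) := by
  simp only [bmul, min_eq_right h]
  ext <;> simp

theorem bmul_mk_mk_self (k l n : ℕ) : bmul (k, l) (l, n) = (k, n) := by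
  simp [bmul_mk_mk_of_le le_rfl]

section ClosedUnderBmul

variable {S : Set (ℕ × ℕ)} (hS : ∀ x ∈ S, ∀ y ∈ S, bmul x y ∈ S) {i j : ℕ}
include hS

theorem mk_add_mul_sub_left_mem (hij : i ≤ j) (h : (j, i) ∈ S) :
    ∀ n, 1 ≤ n → (i + n * (j - i), i) ∈ S := by
  refine Nat.le_induction (by simpa [Nat.add_sub_cancel' hij] using h) fun n hn ih => ?_
  have step : bmul (j, i) (i + n * (j - i), i) = (i + (n + 1) * (j - i), i) := by
    rw [bmul_mk_mk_of_le (Nat.le_add_right _ _)]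
    congr 1
    rw [add_mul, one_mul]
    omega
  exact step ▸ hS _ h _ ih

theorem mk_add_mul_sub_right_mem (hij : i ≤ j) (h : (i, j) ∈ S) :
    ∀ n, 1 ≤ n → (i, i + n * (j - i)) ∈ S := by
  refine Nat.le_induction (by simpa [Nat.add_sub_cancel' hij] using h) fun n hn ih => ?_
  have step : bmul (i, i + n * (j - i)) (i, j) = (i, i + (n + 1) * (j - i)) := by
    rw [bmul_mk_mk_of_ge (Nat.le_add_right _ _)]
    congr 1
    rw [add_mul, one_mul]
    omega
  exact step ▸ hS _ ih _ h

end ClosedUnderBmul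

/-- If a subsemigroup `S` of the bicyclic monoid contains `(i,j)` and `(j,i)` with
`i < j`, then for every `n ≥ 1` the idempotent `(i + n(j−i), i + n(j−i))` belongs to
`S`; in particular `S` contains infinitely many idempotents. -/
theorem idempotents_infinite_of_mem_inv_mem
    (S : Set (ℕ × ℕ)) (hS : ∀ x ∈ S, ∀ y ∈ S, bmul x y ∈ S)
    (i j : ℕ) (hij : i < j) (h₁ : (i, j) ∈ S) (h₂ : (j, i) ∈ S) :
    (∀ n : ℕ, 1 ≤ n → (i + n * (j - i), i + n * (j - i)) ∈ S) ∧
    {k : ℕ | (k, k) ∈ S}.Infinite := by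
  have idem_mem : ∀ n : ℕ, 1 ≤ n → (i + n * (j - i), i + n * (j - i)) ∈ S := fun n hn =>
    bmul_mk_mk_self _ i _ ▸ hS _ (mk_add_mul_sub_left_mem hS hij.le h₂ n hn)
      _ (mk_add_mul_sub_right_mem hS hij.le h₁ n hn)
  refine ⟨idem_mem, Set.infinite_of_forall_exists_gt fun a => ⟨_, idem_mem (a + 1) le_add_self, ?_⟩⟩
  have : a + 1 ≤ (a + 1) * (j - i) := Nat.le_mul_of_pos_right _ (Nat.sub_pos_of_lt hij)
  omega
end

section
/- Let S be a subsemigroup of the bicyclic monoid containing an element (i, i+k) with k ≥ 1 and an element (j+l, j) with l ≥ 1. Then for every positive integer t the idempotent (max(i,j) + k·l·t, max(i,j) + k·l·t) belongs to S; in particular the set of idempotents of S is infinite. -/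
theorem bmul_mk_self_add (i a b : ℕ) : bmul (i, i + a) (i, i + b) = (i, i + (a + b)) := by
  simp only [bmul, Prod.mk.injEq]
  omega

theorem bmul_mk_add_self (j a b : ℕ) : bmul (j + a, j) (j + b, j) = (j + (a + b), j) := by
  simp only [bmul, Prod.mk.injEq]
  omega

theorem bmul_mk_add_self_mk_self_add (i j m : ℕ) :
    bmul (j + m, j) (i, i + m) = (max i j + m, max i j + m) := by
  simp only [bmul, Prod.mk.injEq]
  omega

section Closed

variable {S : Set (ℕ × ℕ)} (hS : ∀ x ∈ S, ∀ y ∈ S, bmul x y ∈ S)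
include hS

theorem mk_self_add_mul_mem {i k : ℕ} (h : (i, i + k) ∈ S) {n : ℕ} (hn : 1 ≤ n) :
    (i, i + k * n) ∈ S := by
  induction n, hn using Nat.le_induction with
  | base => simpa using h
  | succ n _ ih => simpa [bmul_mk_self_add, Nat.mul_succ, add_comm] using hS _ h _ ih

theorem mk_add_mul_self_mem {j l : ℕ} (h : (j + l, j) ∈ S) {n : ℕ} (hn : 1 ≤ n) :
    (j + l * n, j) ∈ S := by
  induction n, hn using Nat.le_induction with
  | base => simpa using h
  | succ n _ ih => simpa [bmul_mk_add_self, Nat.mul_succ, add_comm] using hS _ h _ ih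

end Closed

/-- If a subsemigroup `S` of the bicyclic monoid contains an element `(i, i+k)` with
`k ≥ 1` and an element `(j+l, j)` with `l ≥ 1`, then for every `t ≥ 1` the idempotent
`(max(i,j) + k·l·t, max(i,j) + k·l·t)` belongs to `S`; in particular `S` contains
infinitely many idempotents. -/
theorem idempotents_infinite_of_mem_Cplus_and_mem_Cminus
    (S : Set (ℕ × ℕ)) (hS : ∀ x ∈ S, ∀ y ∈ S, bmul x y ∈ S)
    (i k j l : ℕ) (hk : 1 ≤ k) (hl : 1 ≤ l)
    (h₁ : (i, i + k) ∈ S) (h₂ : (j + l, j) ∈ S) :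
    (∀ t : ℕ, 1 ≤ t → (max i j + k * l * t, max i j + k * l * t) ∈ S) ∧
    {x : ℕ | (x, x) ∈ S}.Infinite := by
  have hidem : ∀ t : ℕ, 1 ≤ t → (max i j + k * l * t, max i j + k * l * t) ∈ S := by
    intro t ht
    have hplus := mk_self_add_mul_mem hS h₁ (Nat.mul_le_mul hl ht)
    have hminus := mk_add_mul_self_mem hS h₂ (Nat.mul_le_mul hk ht)
    rw [← mul_assoc] at hplus
    rw [← mul_assoc, mul_comm l k] at hminus
    simpa only [bmul_mk_add_self_mk_self_add] using hS _ hminus _ hplus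
  refine ⟨hidem, Set.infinite_of_forall_exists_gt fun a => ⟨_, hidem (a + 1) le_add_self, ?_⟩⟩
  have : a + 1 ≤ k * l * (a + 1) := Nat.le_mul_of_pos_left _ (Nat.mul_pos hk hl)
  omega
end

section
/- Let S be a subsemigroup of the bicyclic monoid and let n ∈ ℕ, with e = (n,n). Then S \ (S·e ∪ e·S) = {(k,l) ∈ S : k < n and l < n}; in particular this set is finite. -/
lemma le_fst_bmul (k m : ℕ) (x : ℕ × ℕ) : k ≤ (bmul (k, m) x).1 := by
  simp only [bmul]
  omega

lemma le_snd_bmul (x : ℕ × ℕ) (m n : ℕ) : n ≤ (bmul x (m, n)).2 := by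
  simp only [bmul]
  omega

lemma bmul_idem_of_le_fst {n : ℕ} {x : ℕ × ℕ} (h : n ≤ x.1) : bmul (n, n) x = x := by
  ext <;> simp only [bmul] <;> omega

lemma bmul_idem_of_le_snd {n : ℕ} {x : ℕ × ℕ} (h : n ≤ x.2) : bmul x (n, n) = x := by
  ext <;> simp only [bmul] <;> omega

/-- Translates by `e = (n, n)` have a coordinate `≥ n`, and an element with such a coordinate
is its own translate. -/
lemma diff_translates_eq (S : Set (ℕ × ℕ)) (n : ℕ) :
    S \ ((fun s => bmul s (n, n)) '' S ∪ (fun s => bmul (n, n) s) '' S) =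
      {x ∈ S | x.1 < n ∧ x.2 < n} := by
  ext x
  simp only [Set.mem_sdiff, Set.mem_union, Set.mem_image, Set.mem_ofPred_eq, not_or, not_exists,
    not_and]
  constructor
  · rintro ⟨hx, not_right, not_left⟩
    refine ⟨hx, ?_, ?_⟩
    · by_contra! h
      exact not_left x hx (bmul_idem_of_le_fst h)
    · by_contra! h
      exact not_right x hx (bmul_idem_of_le_snd h)
  · rintro ⟨hx, h1, h2⟩
    refine ⟨hx, fun s _ hs => ?_, fun s _ hs => ?_⟩
    · exact h2.not_ge (hs ▸ le_snd_bmul s n n)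
    · exact h1.not_ge (hs ▸ le_fst_bmul n n s)

lemma finite_setOf_lt_lt (S : Set (ℕ × ℕ)) (n : ℕ) :
    {x ∈ S | x.1 < n ∧ x.2 < n}.Finite :=
  ((Set.finite_lt_nat n).prod (Set.finite_lt_nat n)).subset fun _ hx => hx.2

theorem diff_translates_eq_and_finite_general
    (S : Set (ℕ × ℕ)) (n : ℕ) :
    S \ ((fun s => bmul s (n, n)) '' S ∪ (fun s => bmul (n, n) s) '' S) =
      {x ∈ S | x.1 < n ∧ x.2 < n} ∧
    (S \ ((fun s => bmul s (n, n)) '' S ∪ (fun s => bmul (n, n) s) '' S)).Finite := by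
  rw [diff_translates_eq]
  exact ⟨rfl, finite_setOf_lt_lt S n⟩

/-- For a subsemigroup `S` of the bicyclic monoid and the idempotent `e = (n,n)`, the set
`S \ (S·e ∪ e·S)` equals `{(k,l) ∈ S : k < n and l < n}`; in particular it is finite. -/
theorem diff_translates_eq_and_finite
    (S : Set (ℕ × ℕ)) (hS : ∀ x ∈ S, ∀ y ∈ S, bmul x y ∈ S) (n : ℕ) :
    S \ ((fun s => bmul s (n, n)) '' S ∪ (fun s => bmul (n, n) s) '' S) =
      {x ∈ S | x.1 < n ∧ x.2 < n} ∧
    (S \ ((fun s => bmul s (n, n)) '' S ∪ (fun s => bmul (n, n) s) '' S)).Finite :=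
  diff_translates_eq_and_finite_general S n
end
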